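/- For γ > 1 and fixed p₀ > 0, ρ₀ > 0, the Euler pressure wave function f (shock branch (p − p₀)*sqrt(C/(p+B)) for p > p₀, rarefaction branch (2c₀/(γ−1))*((p/p₀)^((γ−1)/(2γ)) − 1) for 0 < p ≤ p₀) satisfies f''(p) < 0 on each branch; in particular the Euler pressure function φ(p) = f(p; w_ℓ) + f(p; w_r) + u_r − u_ℓ is strictly concave wherever twice differentiable. -/

import Mathlib

/-!
Away from `p₀` the wave function agrees near `p` with one of its branches. The rarefaction
branch is `-K + (K / p₀ ^ α) p ^ α` with `K > 0` and `α = (γ - 1) / (2γ) ∈ (0, 1)`; the shock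
branch is `√C ((p + B) ^ (1/2) - (p₀ + B) (p + B) ^ (-1/2))`. Both are positive combinations of
concave powers, so `(x ^ r)'' = r (r - 1) x ^ (r - 2)` makes their second derivatives negative.
Away from `pl` and `pr`, `φ` is the sum of two such functions plus a constant.
-/

noncomputable def eulerWave (γ p₀ ρ₀ : ℝ) : ℝ → ℝ := fun p =>
  if p ≤ p₀ then
    (2 * Real.sqrt (γ * p₀ / ρ₀) / (γ - 1)) * ((p / p₀) ^ ((γ - 1) / (2 * γ)) - 1)
  else
    (p - p₀) * Real.sqrt ((2 / ((γ + 1) * ρ₀)) / (p + ((γ - 1) / (γ + 1)) * p₀))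

noncomputable def eulerPressureFun (γ pl ρl pr ρr ul ur : ℝ) : ℝ → ℝ := fun p =>
  eulerWave γ pl ρl p + eulerWave γ pr ρr p + ur - ul

open Filter Topology Real

lemma deriv_deriv_eq_iteratedDeriv_two {𝕜 F : Type*} [NontriviallyNormedField 𝕜]
    [NormedAddCommGroup F] [NormedSpace 𝕜 F] (f : 𝕜 → F) :
    deriv (deriv f) = iteratedDeriv 2 f := by
  rw [iteratedDeriv_eq_iterate]
  rfl

lemma iteratedDeriv_two_rpow_const (r x : ℝ) :
    iteratedDeriv 2 (fun y : ℝ => y ^ r) x = r * (r - 1) * x ^ (r - 2) := by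
  rw [iteratedDeriv_eq_iterate, iter_deriv_rpow_const]
  simp [descPochhammer_succ_right]

lemma iteratedDeriv_two_rpow_add_const (r a x : ℝ) :
    iteratedDeriv 2 (fun y : ℝ => (y + a) ^ r) x = r * (r - 1) * (x + a) ^ (r - 2) := by
  rw [iteratedDeriv_comp_add_const 2 (· ^ r) a]
  exact iteratedDeriv_two_rpow_const r (x + a)

section Rarefaction

variable {K α p₀ p : ℝ}

lemma contDiffAt_rarefaction (hp₀ : 0 < p₀) (hp : 0 < p) :
    ContDiffAt ℝ 2 (fun y => K * ((y / p₀) ^ α - 1)) p := by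
  fun_prop (disch := positivity)

lemma iteratedDeriv_two_rarefaction (hp₀ : 0 < p₀) (hp : 0 < p) :
    iteratedDeriv 2 (fun y => K * ((y / p₀) ^ α - 1)) p =
      K / p₀ ^ α * (α * (α - 1) * p ^ (α - 2)) := by
  have hloc : (fun y => K * ((y / p₀) ^ α - 1)) =ᶠ[𝓝 p] fun y => -K + K / p₀ ^ α * y ^ α := by
    filter_upwards [eventually_gt_nhds hp] with y hy
    rw [div_rpow hy.le hp₀.le]
    ring
  rw [hloc.iteratedDeriv_eq, iteratedDeriv_const_add two_pos, iteratedDeriv_const_mul_field,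
    iteratedDeriv_two_rpow_const]

lemma iteratedDeriv_two_rarefaction_neg (hK : 0 < K) (hα₀ : 0 < α) (hα₁ : α < 1)
    (hp₀ : 0 < p₀) (hp : 0 < p) :
    iteratedDeriv 2 (fun y => K * ((y / p₀) ^ α - 1)) p < 0 := by
  rw [iteratedDeriv_two_rarefaction hp₀ hp]
  have : α * (α - 1) < 0 := mul_neg_of_pos_of_neg hα₀ (by linarith)
  exact mul_neg_of_pos_of_neg (by positivity) (mul_neg_of_neg_of_pos this (by positivity))

end Rarefaction

section Shock

variable {C B p₀ p : ℝ}

/-- Writing `p - p₀ = (p + B) - (p₀ + B)` splits the shock branch into two concave powers. -/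
lemma shock_eq (hC : 0 ≤ C) (hp : 0 < p + B) :
    (p - p₀) * √(C / (p + B)) =
      √C * (p + B) ^ (1 / 2 : ℝ) + -(√C * (p₀ + B)) * (p + B) ^ (-(1 / 2) : ℝ) := by
  have hsplit : (p + B) ^ (1 / 2 : ℝ) = (p + B) * (p + B) ^ (-(1 / 2) : ℝ) := by
    rw [← rpow_one_add' hp.le (by norm_num)]
    norm_num
  rw [hsplit, sqrt_div hC, rpow_neg hp.le, ← sqrt_eq_rpow, div_eq_mul_inv]
  ring

lemma shock_eventuallyEq (hC : 0 ≤ C) (hp : 0 < p + B) :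
    (fun y => (y - p₀) * √(C / (y + B))) =ᶠ[𝓝 p]
      fun y => √C * (y + B) ^ (1 / 2 : ℝ) + -(√C * (p₀ + B)) * (y + B) ^ (-(1 / 2) : ℝ) := by
  filter_upwards [eventually_gt_nhds (show -B < p by linarith)] with y hy
  exact shock_eq hC (by linarith)

lemma contDiffAt_shock (hC : 0 ≤ C) (hp : 0 < p + B) :
    ContDiffAt ℝ 2 (fun y => (y - p₀) * √(C / (y + B))) p := by
  refine ContDiffAt.congr_of_eventuallyEq ?_ (shock_eventuallyEq hC hp)
  fun_prop (disch := positivity)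

lemma iteratedDeriv_two_shock (hC : 0 ≤ C) (hp : 0 < p + B) :
    iteratedDeriv 2 (fun y => (y - p₀) * √(C / (y + B))) p =
      -(√C / 4) * (p + B) ^ (-(3 / 2) : ℝ) - 3 / 4 * √C * (p₀ + B) * (p + B) ^ (-(5 / 2) : ℝ) := by
  rw [(shock_eventuallyEq hC hp).iteratedDeriv_eq,
    iteratedDeriv_fun_add (by fun_prop (disch := positivity)) (by fun_prop (disch := positivity)),
    iteratedDeriv_const_mul_field, iteratedDeriv_const_mul_field,
    iteratedDeriv_two_rpow_add_const, iteratedDeriv_two_rpow_add_const]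
  norm_num
  ring

lemma iteratedDeriv_two_shock_neg (hC : 0 < C) (hp₀ : 0 < p₀ + B) (hp : 0 < p + B) :
    iteratedDeriv 2 (fun y => (y - p₀) * √(C / (y + B))) p < 0 := by
  rw [iteratedDeriv_two_shock hC.le hp]
  have : 0 < √C := sqrt_pos.2 hC
  have : 0 < (p + B) ^ (-(3 / 2) : ℝ) := by positivity
  have : 0 < (p₀ + B) * (p + B) ^ (-(5 / 2) : ℝ) := by positivity
  nlinarith

end Shock

section EulerWave

variable {γ p₀ ρ₀ p : ℝ}

lemma eulerWave_eventuallyEq_rarefaction (hp : p < p₀) :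
    eulerWave γ p₀ ρ₀ =ᶠ[𝓝 p]
      fun y => 2 * √(γ * p₀ / ρ₀) / (γ - 1) * ((y / p₀) ^ ((γ - 1) / (2 * γ)) - 1) := by
  filter_upwards [eventually_lt_nhds hp] with y hy
  simp only [eulerWave, if_pos hy.le]

lemma eulerWave_eventuallyEq_shock (hp : p₀ < p) :
    eulerWave γ p₀ ρ₀ =ᶠ[𝓝 p]
      fun y => (y - p₀) * √(2 / ((γ + 1) * ρ₀) / (y + (γ - 1) / (γ + 1) * p₀)) := by
  filter_upwards [eventually_gt_nhds hp] with y hy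
  simp only [eulerWave, if_neg hy.not_ge]

variable (hγ : 1 < γ) (hp₀ : 0 < p₀) (hρ₀ : 0 < ρ₀)
include hγ hp₀ hρ₀

lemma contDiffAt_eulerWave (hp : 0 < p) (hne : p ≠ p₀) :
    ContDiffAt ℝ 2 (eulerWave γ p₀ ρ₀) p := by
  rcases hne.lt_or_gt with hlt | hgt
  · exact (contDiffAt_rarefaction hp₀ hp).congr_of_eventuallyEq
      (eulerWave_eventuallyEq_rarefaction hlt)
  · have hB : 0 < (γ - 1) / (γ + 1) * p₀ := by
      have : 0 < γ - 1 := by linarith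
      positivity
    exact (contDiffAt_shock (by positivity) (by linarith)).congr_of_eventuallyEq
      (eulerWave_eventuallyEq_shock hgt)

lemma iteratedDeriv_two_eulerWave_neg (hp : 0 < p) (hne : p ≠ p₀) :
    iteratedDeriv 2 (eulerWave γ p₀ ρ₀) p < 0 := by
  have hγ₁ : 0 < γ - 1 := by linarith
  rcases hne.lt_or_gt with hlt | hgt
  · rw [(eulerWave_eventuallyEq_rarefaction hlt).iteratedDeriv_eq]
    refine iteratedDeriv_two_rarefaction_neg (by positivity) (by positivity) ?_ hp₀ hp
    rw [div_lt_one (by positivity)]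
    linarith
  · have hB : 0 < (γ - 1) / (γ + 1) * p₀ := by positivity
    rw [(eulerWave_eventuallyEq_shock hgt).iteratedDeriv_eq]
    exact iteratedDeriv_two_shock_neg (by positivity) (by linarith) (by linarith)

end EulerWave

lemma iteratedDeriv_two_eulerPressureFun {γ pl ρl pr ρr ul ur p : ℝ}
    (hl : ContDiffAt ℝ 2 (eulerWave γ pl ρl) p) (hr : ContDiffAt ℝ 2 (eulerWave γ pr ρr) p) :
    iteratedDeriv 2 (eulerPressureFun γ pl ρl pr ρr ul ur) p =
      iteratedDeriv 2 (eulerWave γ pl ρl) p + iteratedDeriv 2 (eulerWave γ pr ρr) p := by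
  have : eulerPressureFun γ pl ρl pr ρr ul ur =
      fun y => (ur - ul) + (eulerWave γ pl ρl y + eulerWave γ pr ρr y) := by
    ext y
    simp only [eulerPressureFun]
    ring
  rw [this, iteratedDeriv_const_add two_pos]
  exact iteratedDeriv_fun_add hl hr

theorem stmt_17 (γ p₀ ρ₀ : ℝ) (hγ : 1 < γ) (hp₀ : 0 < p₀) (hρ₀ : 0 < ρ₀) :
    ((∀ p : ℝ, p₀ < p → deriv (deriv (eulerWave γ p₀ ρ₀)) p < 0) ∧
      (∀ p : ℝ, 0 < p → p < p₀ → deriv (deriv (eulerWave γ p₀ ρ₀)) p < 0)) ∧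
    (∀ pl ρl pr ρr ul ur : ℝ, 0 < pl → 0 < ρl → 0 < pr → 0 < ρr →
      ∀ p : ℝ, 0 < p → p ≠ pl → p ≠ pr →
        deriv (deriv (eulerPressureFun γ pl ρl pr ρr ul ur)) p < 0) := by
  simp only [deriv_deriv_eq_iteratedDeriv_two]
  refine ⟨⟨fun p hp => ?_, fun p hp hlt => ?_⟩, ?_⟩
  · exact iteratedDeriv_two_eulerWave_neg hγ hp₀ hρ₀ (hp₀.trans hp) hp.ne'
  · exact iteratedDeriv_two_eulerWave_neg hγ hp₀ hρ₀ hp hlt.ne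
  · intro pl ρl pr ρr ul ur hpl hρl hpr hρr p hp hnel hner
    rw [iteratedDeriv_two_eulerPressureFun (contDiffAt_eulerWave hγ hpl hρl hp hnel)
      (contDiffAt_eulerWave hγ hpr hρr hp hner)]
    exact add_neg (iteratedDeriv_two_eulerWave_neg hγ hpl hρl hp hnel)
      (iteratedDeriv_two_eulerWave_neg hγ hpr hρr hp hner)
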